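/- arXiv:2103.13840 — 6 statements merged into one kernel-verified Lean document; each statement's English description precedes it below -/
import Mathlib

section
/- Let X be an m×n real matrix with strictly positive entries (m, n ≥ 1). Then there exists a pair (u, v) of vectors u ∈ ℝ^m, v ∈ ℝ^n with strictly positive entries such that (1/m)·Σ_{i=1}^m u_i² X_{i,j} v_j² = 1 for every j ∈ [n] and (1/n)·Σ_{j=1}^n u_i² X_{i,j} v_j² = 1 for every i ∈ [m]. Moreover, this pair is unique up to a positive scalar: if (u′, v′) is another pair of positive vectors satisfying the same equations, then there exists a > 0 with u′ = a·u and v′ = a^{-1}·v. -/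
/-!
Existence is variational. Writing `S_i(y) = ∑_j X_ij e^{y_j}`, the potential
`F(y) = n ∑_i log S_i(y) - m ∑_j y_j` is unchanged when a constant is added to `y`, and it equals
`∑_{i,l} log (S_i(y) e^{-y_l})`, a sum of terms bounded below one of which is at least
`y_j - y_k + const`. So `F` attains a global minimum, and the vanishing of its partial derivatives
there says that `u_i² = n / S_i(y)`, `v_j² = e^{y_j}` solve the equations.

Uniqueness is a maximum principle. If `(u, v)` and `(u', v')` are solutions, put
`r_i = (u'_i / u_i)²`, `c_j = (v'_j / v_j)²` and let `c` be largest at `j₀`. The row equations give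
`r_i c_{j₀} ≥ 1`, the column `j₀` then forces `r_i c_{j₀} = 1`, and the row equations again force
`r_i c_j = 1` for all `i, j`.
-/

open Finset Real

theorem exists_forall_le_of_add_const_invariant {ι : Type*} [Fintype ι] [Nonempty ι]
    {f : (ι → ℝ) → ℝ} (hf : Continuous f) (hinv : ∀ y c, f (y + fun _ => c) = f y) (A : ℝ)
    (hA : ∀ y j k, A + (y j - y k) ≤ f y) : ∃ y, ∀ z, f y ≤ f z := by
  set R := f 0 - A with hR
  have h0 : (0 : ι → ℝ) ∈ Set.Icc 0 (fun _ => R) := by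
    obtain ⟨j⟩ := ‹Nonempty ι›
    have hA0 := hA 0 j j
    exact ⟨le_rfl, fun _ => by simp only [Pi.zero_apply]; linarith⟩
  obtain ⟨y, -, hy⟩ := isCompact_Icc.exists_isMinOn ⟨0, h0⟩ hf.continuousOn
  refine ⟨y, fun z => ?_⟩
  obtain ⟨k, hk⟩ := Finite.exists_min z
  by_cases hz : ∀ j, z j - z k ≤ R
  · rw [← hinv z (-z k)]
    exact hy ⟨fun j => by simpa [sub_eq_add_neg] using hk j,
      fun j => by simpa [sub_eq_add_neg] using hz j⟩
  · push Not at hz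
    obtain ⟨j, hj⟩ := hz
    have hy0 : f y ≤ f 0 := hy h0
    linarith [hA z j k]

theorem mul_eq_one_of_weighted_sums_eq {ι κ : Type*} [Fintype ι] [Fintype κ] [Nonempty κ]
    (Y : Matrix ι κ ℝ) (hY : ∀ i j, 0 < Y i j) (r : ι → ℝ) (c : κ → ℝ) (hr : ∀ i, 0 ≤ r i)
    (hrow : ∀ i, ∑ j, Y i j * (r i * c j) = ∑ j, Y i j)
    (hcol : ∀ j, ∑ i, Y i j * (r i * c j) = ∑ i, Y i j) (i : ι) (j : κ) : r i * c j = 1 := by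
  obtain ⟨j₀, hj₀⟩ := Finite.exists_max c
  have hle : ∀ i j, r i * c j ≤ r i * c j₀ := fun i j => mul_le_mul_of_nonneg_left (hj₀ j) (hr i)
  have one_le_at_max : ∀ i, 1 ≤ r i * c j₀ := by
    intro i
    have hpos : 0 < ∑ j, Y i j := sum_pos (fun j _ => hY i j) univ_nonempty
    refine le_of_mul_le_mul_right ?_ hpos
    calc 1 * ∑ j, Y i j = ∑ j, Y i j * (r i * c j) := by rw [one_mul, hrow]
      _ ≤ ∑ j, Y i j * (r i * c j₀) := sum_le_sum fun j _ =>
          mul_le_mul_of_nonneg_left (hle i j) (hY i j).le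
      _ = r i * c j₀ * ∑ j, Y i j := by rw [← sum_mul, mul_comm]
  have eq_one_at_max : ∀ i, r i * c j₀ = 1 := by
    have termwise := (sum_eq_sum_iff_of_le fun i _ =>
      le_mul_of_one_le_right (hY i j₀).le (one_le_at_max i)).mp (hcol j₀).symm
    exact fun i =>
      (mul_right_eq_self₀.mp (termwise i (mem_univ i)).symm).resolve_right (hY i j₀).ne'
  have termwise := (sum_eq_sum_iff_of_le (s := univ) (f := fun j => Y i j * (r i * c j))
    (g := Y i) fun j _ =>
      mul_le_of_le_one_right (hY i j).le ((hle i j).trans (eq_one_at_max i).le)).mp (hrow i)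
  exact (mul_right_eq_self₀.mp (termwise j (mem_univ j))).resolve_right (hY i j).ne'

section

variable {ι κ : Type*} [Fintype κ]

theorem sum_mul_exp_pos [Nonempty κ] {X : Matrix ι κ ℝ} (hX : ∀ i j, 0 < X i j) (y : κ → ℝ)
    (i : ι) : 0 < ∑ j, X i j * exp (y j) :=
  sum_pos (fun j _ => mul_pos (hX i j) (exp_pos _)) univ_nonempty

variable [Fintype ι]

noncomputable def scalingPotential (X : Matrix ι κ ℝ) (y : κ → ℝ) : ℝ :=
  Fintype.card κ * ∑ i, log (∑ j, X i j * exp (y j)) - Fintype.card ι * ∑ j, y j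

/-- `a` and `b` stand for the squared scaling vectors `u²` and `v²`. -/
def IsBalancedScaling (X : Matrix ι κ ℝ) (a : ι → ℝ) (b : κ → ℝ) : Prop :=
  (∀ j, ∑ i, a i * X i j * b j = Fintype.card ι) ∧
    (∀ i, ∑ j, a i * X i j * b j = Fintype.card κ)

variable {X : Matrix ι κ ℝ}

theorem scalingPotential_add_const [Nonempty κ] (hX : ∀ i j, 0 < X i j) (y : κ → ℝ) (c : ℝ) :
    scalingPotential X (y + fun _ => c) = scalingPotential X y := by
  have hlog : ∀ i, log (∑ j, X i j * exp (y j + c)) = c + log (∑ j, X i j * exp (y j)) := by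
    intro i
    simp_rw [exp_add, ← mul_assoc, ← sum_mul, mul_comm _ (exp c)]
    rw [log_mul (exp_pos c).ne' (sum_mul_exp_pos hX y i).ne', log_exp]
  simp only [scalingPotential, Pi.add_apply, hlog, sum_add_distrib, sum_const, card_univ,
    nsmul_eq_mul]
  ring

theorem le_scalingPotential {ε : ℝ} (hε : 0 < ε) (hX : ∀ i j, ε ≤ X i j) (i₀ : ι) (y : κ → ℝ)
    (j k : κ) :
    Fintype.card ι * Fintype.card κ * log ε + (y j - y k) ≤ scalingPotential X y := by
  have hlog : ∀ i l, log ε + y l ≤ log (∑ j, X i j * exp (y j)) := by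
    intro i l
    rw [← log_exp (y l), ← log_mul hε.ne' (exp_pos _).ne']
    refine log_le_log (by positivity) ?_
    exact (mul_le_mul_of_nonneg_right (hX i l) (exp_pos _).le).trans
      (single_le_sum (fun j _ => mul_nonneg (hε.trans_le (hX i j)).le (exp_pos _).le) (mem_univ l))
  set g : ι → κ → ℝ := fun i l => log (∑ j, X i j * exp (y j)) - y l - log ε
  have hg : ∀ i l, 0 ≤ g i l := fun i l => by simp only [g]; linarith [hlog i l]
  have hgk : y j - y k ≤ g i₀ k := by simp only [g]; linarith [hlog i₀ j]
  have hsum : scalingPotential X y =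
      Fintype.card ι * Fintype.card κ * log ε + ∑ i, ∑ l, g i l := by
    simp only [g, scalingPotential, sum_sub_distrib, sum_const, card_univ, nsmul_eq_mul]
    rw [mul_sum]
    ring
  rw [hsum]
  gcongr
  exact hgk.trans ((single_le_sum (fun l _ => hg i₀ l) (mem_univ k)).trans
    (single_le_sum (fun i _ => sum_nonneg fun l _ => hg i l) (mem_univ i₀)))

theorem hasDerivAt_scalingPotential [Nonempty κ] (hX : ∀ i j, 0 < X i j) (y e : κ → ℝ) :
    HasDerivAt (fun t : ℝ => scalingPotential X (y + t • e))
      (Fintype.card κ * ∑ i, (∑ j, X i j * exp (y j) * e j) / ∑ j, X i j * exp (y j)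
        - Fintype.card ι * ∑ j, e j) 0 := by
  have hline : ∀ j, HasDerivAt (fun t : ℝ => y j + t * e j) (e j) 0 := fun j => by
    simpa using ((hasDerivAt_id (0 : ℝ)).mul_const (e j)).const_add (y j)
  have hS : ∀ i, HasDerivAt (fun t : ℝ => ∑ j, X i j * exp (y j + t * e j))
      (∑ j, X i j * exp (y j) * e j) 0 := fun i => by
    simpa [mul_assoc] using
      HasDerivAt.fun_sum (u := univ) fun j _ => ((hline j).exp).const_mul (X i j)
  have hlogS := HasDerivAt.fun_sum (u := univ) fun i _ =>
    (hS i).log (by simpa using (sum_mul_exp_pos hX y i).ne')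
  have hsum := HasDerivAt.fun_sum (u := univ) fun j _ => hline j
  exact ((hlogS.const_mul (Fintype.card κ : ℝ)).fun_sub
    (hsum.const_mul (Fintype.card ι : ℝ))).congr_deriv (by simp)

theorem continuous_scalingPotential [Nonempty κ] (hX : ∀ i j, 0 < X i j) :
    Continuous (scalingPotential X) := by
  unfold scalingPotential
  fun_prop (disch := exact fun y => (sum_mul_exp_pos hX y _).ne')

theorem exists_isBalancedScaling [Nonempty ι] [Nonempty κ] (hX : ∀ i j, 0 < X i j) :
    ∃ a b, (∀ i, 0 < a i) ∧ (∀ j, 0 < b j) ∧ IsBalancedScaling X a b := by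
  classical
  obtain ⟨p, hp⟩ := Finite.exists_min fun p : ι × κ => X p.1 p.2
  obtain ⟨i₀⟩ := ‹Nonempty ι›
  obtain ⟨y, hy⟩ := exists_forall_le_of_add_const_invariant (continuous_scalingPotential hX)
    (scalingPotential_add_const hX) _
    (le_scalingPotential (hX p.1 p.2) (fun i j => hp (i, j)) i₀)
  set S := fun i => ∑ j, X i j * exp (y j)
  have hS : ∀ i, 0 < S i := sum_mul_exp_pos hX y
  have hcrit : ∀ k, Fintype.card κ * ∑ i, X i k * exp (y k) / S i = Fintype.card ι := by
    intro k
    have hmin : IsLocalMin (fun t : ℝ => scalingPotential X (y + t • Pi.single k 1)) 0 :=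
      Filter.Eventually.of_forall fun t => by simpa using hy _
    have := hmin.hasDerivAt_eq_zero (hasDerivAt_scalingPotential hX y (Pi.single k 1))
    simpa [Pi.single_apply, sub_eq_zero] using this
  refine ⟨fun i => Fintype.card κ / S i, fun j => exp (y j),
    fun i => div_pos (mod_cast Fintype.card_pos) (hS i), fun j => exp_pos _, fun j => ?_,
    fun i => ?_⟩
  · rw [← hcrit j, mul_sum]
    exact sum_congr rfl fun i _ => by ring
  · simp_rw [mul_assoc, ← mul_sum]
    exact div_mul_cancel₀ _ (hS i).ne'

theorem IsBalancedScaling.unique [Nonempty ι] [Nonempty κ] (hX : ∀ i j, 0 < X i j)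
    {a a' : ι → ℝ} {b b' : κ → ℝ} (ha : ∀ i, 0 < a i) (hb : ∀ j, 0 < b j)
    (ha' : ∀ i, 0 < a' i) (hb' : ∀ j, 0 < b' j) (h : IsBalancedScaling X a b)
    (h' : IsBalancedScaling X a' b') : ∃ t : ℝ, 0 < t ∧ a' = t • a ∧ b' = t⁻¹ • b := by
  set r := fun i => a' i / a i
  set c := fun j => b' j / b j
  have hscaled : ∀ i j, a i * X i j * b j * (r i * c j) = a' i * X i j * b' j := fun i j => by
    simp only [r, c]
    field_simp [(ha i).ne', (hb j).ne']
  have hrc := mul_eq_one_of_weighted_sums_eq (fun i j => a i * X i j * b j)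
    (fun i j => mul_pos (mul_pos (ha i) (hX i j)) (hb j)) r c
    (fun i => (div_pos (ha' i) (ha i)).le)
    (fun i => by simp only [hscaled, h.2, h'.2]) (fun j => by simp only [hscaled, h.1, h'.1])
  obtain ⟨i₀⟩ := ‹Nonempty ι›
  obtain ⟨j₀⟩ := ‹Nonempty κ›
  have hr : ∀ i, r i = r i₀ := fun i =>
    mul_right_cancel₀ (div_pos (hb' j₀) (hb j₀)).ne' ((hrc i j₀).trans (hrc i₀ j₀).symm)
  have hc : ∀ j, c j = (r i₀)⁻¹ := fun j => eq_inv_of_mul_eq_one_right (hrc i₀ j)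
  refine ⟨r i₀, div_pos (ha' i₀) (ha i₀), funext fun i => ?_, funext fun j => ?_⟩
  · rw [Pi.smul_apply, smul_eq_mul, ← hr i, div_mul_cancel₀ _ (ha i).ne']
  · rw [Pi.smul_apply, smul_eq_mul, ← hc j, div_mul_cancel₀ _ (hb j).ne']

end

/-- **Existence and uniqueness of the exact scaling factors (u, v).**
For a strictly positive `m × n` matrix `X`, there exists a pair of strictly positive
vectors `u ∈ ℝ^m`, `v ∈ ℝ^n` such that
`(1/m) ∑_i u_i² X_{i,j} v_j² = 1` for all `j` and `(1/n) ∑_j u_i² X_{i,j} v_j² = 1` for all `i`,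
and this pair is unique up to replacing `(u, v)` by `(a·u, a⁻¹·v)` for some `a > 0`. -/
theorem stmt0 (m n : ℕ) (hm : 1 ≤ m) (hn : 1 ≤ n)
    (X : Matrix (Fin m) (Fin n) ℝ) (hX : ∀ i j, 0 < X i j) :
    ∃ u : Fin m → ℝ, ∃ v : Fin n → ℝ,
      (∀ i, 0 < u i) ∧ (∀ j, 0 < v j) ∧
      (∀ j, (1 / (m : ℝ)) * ∑ i, (u i) ^ 2 * X i j * (v j) ^ 2 = 1) ∧
      (∀ i, (1 / (n : ℝ)) * ∑ j, (u i) ^ 2 * X i j * (v j) ^ 2 = 1) ∧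
      (∀ u' : Fin m → ℝ, ∀ v' : Fin n → ℝ,
        (∀ i, 0 < u' i) → (∀ j, 0 < v' j) →
        (∀ j, (1 / (m : ℝ)) * ∑ i, (u' i) ^ 2 * X i j * (v' j) ^ 2 = 1) →
        (∀ i, (1 / (n : ℝ)) * ∑ j, (u' i) ^ 2 * X i j * (v' j) ^ 2 = 1) →
        ∃ a : ℝ, 0 < a ∧ u' = (fun i => a * u i) ∧ v' = (fun j => a⁻¹ * v j)) := by
  have : Nonempty (Fin m) := ⟨⟨0, hm⟩⟩
  have : Nonempty (Fin n) := ⟨⟨0, hn⟩⟩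
  have balanced_iff : ∀ (u : Fin m → ℝ) (v : Fin n → ℝ),
      IsBalancedScaling X (fun i => u i ^ 2) (fun j => v j ^ 2) ↔
        (∀ j, (1 / (m : ℝ)) * ∑ i, (u i) ^ 2 * X i j * (v j) ^ 2 = 1) ∧
        (∀ i, (1 / (n : ℝ)) * ∑ j, (u i) ^ 2 * X i j * (v j) ^ 2 = 1) := by
    intro u v
    simp only [IsBalancedScaling, Fintype.card_fin, one_div_mul_eq_div,
      div_eq_one_iff_eq (Nat.cast_ne_zero.mpr (by omega) : (m : ℝ) ≠ 0),
      div_eq_one_iff_eq (Nat.cast_ne_zero.mpr (by omega) : (n : ℝ) ≠ 0)]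
  obtain ⟨a, b, ha, hb, hab⟩ := exists_isBalancedScaling hX
  have hsqrt : IsBalancedScaling X (fun i => sqrt (a i) ^ 2) (fun j => sqrt (b j) ^ 2) := by
    simpa only [sq_sqrt (ha _).le, sq_sqrt (hb _).le] using hab
  refine ⟨fun i => sqrt (a i), fun j => sqrt (b j), fun i => sqrt_pos.mpr (ha i),
    fun j => sqrt_pos.mpr (hb j), ((balanced_iff _ _).mp hsqrt).1,
    ((balanced_iff _ _).mp hsqrt).2, fun u' v' hu' hv' hcol' hrow' => ?_⟩
  obtain ⟨t, ht, hta, htb⟩ := IsBalancedScaling.unique hX ha hb (fun i => pow_pos (hu' i) 2)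
    (fun j => pow_pos (hv' j) 2) hab ((balanced_iff u' v').mpr ⟨hcol', hrow'⟩)
  refine ⟨sqrt t, sqrt_pos.mpr ht, funext fun i => ?_, funext fun j => ?_⟩
  · rw [← sqrt_mul ht.le, ← smul_eq_mul, ← Pi.smul_apply, ← hta, sqrt_sq (hu' i).le]
  · rw [← sqrt_inv, ← sqrt_mul (inv_nonneg.mpr ht.le), ← smul_eq_mul, ← Pi.smul_apply, ← htb,
      sqrt_sq (hv' j).le]
end

section
/- Let A be a nonnegative m×n real matrix with no zero rows and no zero columns, and suppose: (1) for each k = 1, 2, …, ⌊n/2⌋, A has fewer than ⌈mk/n⌉ rows that each contain at least n − k zero entries; and (2) for each ℓ = 1, 2, …, ⌊m/2⌋, A has fewer than ⌈nℓ/m⌉ columns that each contain at least m − ℓ zero entries. Then: (i) A is not completely decomposable; and (ii) for every pair of nonempty subsets I₁ ⊂ [m] and I₂ ⊂ [n] such that A_{i,j} = 0 for all i ∈ I₁ and j ∈ I₂, it holds that |I₁|·n + |I₂|·m < m·n. -/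
open scoped Classical

lemma stmt6_core (m n : ℕ) (A : Matrix (Fin m) (Fin n) ℝ)
    (hrow : ∀ i, ∃ j, A i j ≠ 0)
    (hcol : ∀ j, ∃ i, A i j ≠ 0)
    (h1 : ∀ k : ℕ, 1 ≤ k → k ≤ n / 2 →
      ((Finset.univ : Finset (Fin m)).filter
          (fun i => n - k ≤ ((Finset.univ : Finset (Fin n)).filter (fun j => A i j = 0)).card)).card
        < Nat.ceil (((m : ℝ) * k) / n))
    (h2 : ∀ l : ℕ, 1 ≤ l → l ≤ m / 2 →
      ((Finset.univ : Finset (Fin n)).filter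
          (fun j => m - l ≤ ((Finset.univ : Finset (Fin m)).filter (fun i => A i j = 0)).card)).card
        < Nat.ceil (((n : ℝ) * l) / m))
    (I₁ : Finset (Fin m)) (I₂ : Finset (Fin n))
    (hI₁ : I₁.Nonempty) (hI₂ : I₂.Nonempty)
    (hz : ∀ i ∈ I₁, ∀ j ∈ I₂, A i j = 0) :
    I₁.card * n + I₂.card * m < m * n := by
  obtain ⟨i₀, hi₀⟩ := hI₁
  obtain ⟨j₀, hj₀⟩ := hI₂
  have hm : 0 < m := i₀.pos
  have hn : 0 < n := j₀.pos
  set a := I₁.card with ha_def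
  set b := I₂.card with hb_def
  have ha_le : a ≤ m := by
    simpa using Finset.card_le_card (Finset.subset_univ I₁)
  have hb_le : b ≤ n := by
    simpa using Finset.card_le_card (Finset.subset_univ I₂)
  have hbn : b < n := by
    obtain ⟨j, hj⟩ := hrow i₀
    have hjI : j ∉ I₂ := fun h => hj (hz i₀ hi₀ j h)
    have hne : I₂ ≠ Finset.univ := fun h => hjI (h ▸ Finset.mem_univ j)
    have := Finset.card_lt_card (Finset.ssubset_univ_iff.mpr hne)
    simpa using this
  have ham : a < m := by
    obtain ⟨i, hi⟩ := hcol j₀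
    have hiI : i ∉ I₁ := fun h => hi (hz i h j₀ hj₀)
    have hne : I₁ ≠ Finset.univ := fun h => hiI (h ▸ Finset.mem_univ i)
    have := Finset.card_lt_card (Finset.ssubset_univ_iff.mpr hne)
    simpa using this
  by_cases hcase1 : n - b ≤ n / 2
  · -- use h1 with k = n - b
    have hk1 : 1 ≤ n - b := by omega
    have hsub : I₁ ⊆ (Finset.univ : Finset (Fin m)).filter
        (fun i => n - (n - b) ≤ ((Finset.univ : Finset (Fin n)).filter (fun j => A i j = 0)).card) := by
      intro i hi
      simp only [Finset.mem_filter, Finset.mem_univ, true_and]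
      have : I₂ ⊆ (Finset.univ : Finset (Fin n)).filter (fun j => A i j = 0) := by
        intro j hj
        simp only [Finset.mem_filter, Finset.mem_univ, true_and]
        exact hz i hi j hj
      have hcard := Finset.card_le_card this
      omega
    have hlt := lt_of_le_of_lt (Finset.card_le_card hsub) (h1 (n - b) hk1 hcase1)
    have hreal : (a : ℝ) < ((m : ℝ) * (n - b : ℕ)) / n := Nat.lt_ceil.mp hlt
    have hna : (0 : ℝ) < (n : ℝ) := by exact_mod_cast hn
    have : (a : ℝ) * n < (m : ℝ) * (n - b : ℕ) := (lt_div_iff₀ hna).mp hreal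
    have hnat : a * n < m * (n - b) := by exact_mod_cast this
    have hnb : (n - b) + b = n := by omega
    calc a * n + b * m < m * (n - b) + b * m := Nat.add_lt_add_right hnat _
      _ = m * ((n - b) + b) := by ring
      _ = m * n := by rw [hnb]
  · by_cases hcase2 : m - a ≤ m / 2
    · -- use h2 with l = m - a
      have hl1 : 1 ≤ m - a := by omega
      have hsub : I₂ ⊆ (Finset.univ : Finset (Fin n)).filter
          (fun j => m - (m - a) ≤ ((Finset.univ : Finset (Fin m)).filter (fun i => A i j = 0)).card) := by
        intro j hj
        simp only [Finset.mem_filter, Finset.mem_univ, true_and]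
        have : I₁ ⊆ (Finset.univ : Finset (Fin m)).filter (fun i => A i j = 0) := by
          intro i hi
          simp only [Finset.mem_filter, Finset.mem_univ, true_and]
          exact hz i hi j hj
        have hcard := Finset.card_le_card this
        omega
      have hlt := lt_of_le_of_lt (Finset.card_le_card hsub) (h2 (m - a) hl1 hcase2)
      have hreal : (b : ℝ) < ((n : ℝ) * (m - a : ℕ)) / m := Nat.lt_ceil.mp hlt
      have hma : (0 : ℝ) < (m : ℝ) := by exact_mod_cast hm
      have : (b : ℝ) * m < (n : ℝ) * (m - a : ℕ) := (lt_div_iff₀ hma).mp hreal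
      have hnat : b * m < n * (m - a) := by exact_mod_cast this
      have hma2 : (m - a) + a = m := by omega
      calc a * n + b * m < a * n + n * (m - a) := Nat.add_lt_add_left hnat _
        _ = n * ((m - a) + a) := by ring
        _ = m * n := by rw [hma2]; ring
    · -- both small: 2a ≤ m - 1, 2b ≤ n - 1
      have h2a : 2 * a + 1 ≤ m := by omega
      have h2b : 2 * b + 1 ≤ n := by omega
      have k1 : n * (2 * a + 1) ≤ n * m := Nat.mul_le_mul_left n h2a
      have k2 : m * (2 * b + 1) ≤ m * n := Nat.mul_le_mul_left m h2b
      nlinarith [k1, k2, hm, hn]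

/-- A nonnegative `m × n` matrix `A` is completely decomposable if there are proper nonempty
subsets `I₁ ⊂ [m]`, `I₂ ⊂ [n]` such that the `I₁ × I₂` block and the `I₁ᶜ × I₂ᶜ` block of `A`
are both zero. -/
def CompletelyDecomposable {m n : ℕ} (A : Matrix (Fin m) (Fin n) ℝ) : Prop :=
  ∃ I₁ : Finset (Fin m), ∃ I₂ : Finset (Fin n),
    I₁.Nonempty ∧ I₂.Nonempty ∧ I₁ ≠ Finset.univ ∧ I₂ ≠ Finset.univ ∧
    (∀ i ∈ I₁, ∀ j ∈ I₂, A i j = 0) ∧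
    (∀ i ∉ I₁, ∀ j ∉ I₂, A i j = 0)

/-- Under the zero-pattern conditions (1) and (2), a nonnegative matrix `A` with no zero
rows and no zero columns is (i) not completely decomposable, and (ii) satisfies:
for all nonempty `I₁ ⊆ [m]`, `I₂ ⊆ [n]` whose `I₁ × I₂` block of `A` is zero,
`|I₁|·n + |I₂|·m < m·n`. -/
theorem stmt6 (m n : ℕ) (A : Matrix (Fin m) (Fin n) ℝ)
    (hA : ∀ i j, 0 ≤ A i j)
    (hrow : ∀ i, ∃ j, A i j ≠ 0)
    (hcol : ∀ j, ∃ i, A i j ≠ 0)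
    (h1 : ∀ k : ℕ, 1 ≤ k → k ≤ n / 2 →
      ((Finset.univ : Finset (Fin m)).filter
          (fun i => n - k ≤ ((Finset.univ : Finset (Fin n)).filter (fun j => A i j = 0)).card)).card
        < Nat.ceil (((m : ℝ) * k) / n))
    (h2 : ∀ l : ℕ, 1 ≤ l → l ≤ m / 2 →
      ((Finset.univ : Finset (Fin n)).filter
          (fun j => m - l ≤ ((Finset.univ : Finset (Fin m)).filter (fun i => A i j = 0)).card)).card
        < Nat.ceil (((n : ℝ) * l) / m)) :
    ¬ CompletelyDecomposable A ∧
    (∀ I₁ : Finset (Fin m), ∀ I₂ : Finset (Fin n),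
      I₁.Nonempty → I₂.Nonempty →
      (∀ i ∈ I₁, ∀ j ∈ I₂, A i j = 0) →
      I₁.card * n + I₂.card * m < m * n) := by
  constructor
  · rintro ⟨I₁, I₂, hne₁, hne₂, hu₁, hu₂, hz₁, hz₂⟩
    have hc₁ := stmt6_core m n A hrow hcol h1 h2 I₁ I₂ hne₁ hne₂ hz₁
    have hne₁' : I₁ᶜ.Nonempty := (Finset.compl_ne_univ_iff_nonempty I₁ᶜ).mp (by simpa using hu₁)
    have hne₂' : I₂ᶜ.Nonempty := (Finset.compl_ne_univ_iff_nonempty I₂ᶜ).mp (by simpa using hu₂)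
    have hc₂ := stmt6_core m n A hrow hcol h1 h2 I₁ᶜ I₂ᶜ hne₁' hne₂'
      (fun i hi j hj => hz₂ i (Finset.mem_compl.mp hi) j (Finset.mem_compl.mp hj))
    rw [Finset.card_compl, Finset.card_compl, Fintype.card_fin, Fintype.card_fin] at hc₂
    have ha_le : I₁.card ≤ m := by
      simpa using Finset.card_le_card (Finset.subset_univ I₁)
    have hb_le : I₂.card ≤ n := by
      simpa using Finset.card_le_card (Finset.subset_univ I₂)
    have e1 : (m - I₁.card) * n + I₁.card * n = m * n := by
      rw [← Nat.add_mul]; congr 1; omega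
    have e2 : (n - I₂.card) * m + I₂.card * m = n * m := by
      rw [← Nat.add_mul]; congr 1; omega
    have key : ∀ p q p' q' r : ℕ, p + q < r → p' + q' < r → p' + p = r → q' + q = r → False := by
      intro p q p' q' r h₁ h₂ h₃ h₄; omega
    exact key (I₁.card * n) (I₂.card * m) ((m - I₁.card) * n) ((n - I₂.card) * m) (m * n)
      hc₁ (by rw [Nat.mul_comm m n] at hc₂ ⊢; omega) e1 (by rw [Nat.mul_comm m n]; exact e2)
  · intro I₁ I₂ hne₁ hne₂ hz
    exact stmt6_core m n A hrow hcol h1 h2 I₁ I₂ hne₁ hne₂ hz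
end

section
/- Let Y be a real random variable with mean E[Y] = X and variance Var[Y] = a + bX + cX², where a, b, c are real constants with c ≠ −1 and Y has a finite second moment. Then the statistic (a + bY + cY²)/(1 + c) is an unbiased estimator of the variance: E[(a + bY + cY²)/(1 + c)] = Var[Y]. -/
open MeasureTheory ProbabilityTheory

lemma integral_quadratic_eq_of_memLp {Ω : Type*} [MeasurableSpace Ω] {μ : Measure Ω}
    [IsProbabilityMeasure μ] {Y : Ω → ℝ} (hY : MemLp Y 2 μ) (a b c : ℝ) :
    ∫ ω, (a + b * Y ω + c * Y ω ^ 2) ∂μ = a + b * μ[Y] + c * (variance Y μ + μ[Y] ^ 2) := by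
  have hY1 : Integrable (fun ω => b * Y ω) μ := (hY.integrable one_le_two).const_mul b
  have hY2 : Integrable (fun ω => c * Y ω ^ 2) μ := hY.integrable_sq.const_mul c
  have hlin : Integrable (fun ω => a + b * Y ω) μ := (integrable_const a).add hY1
  rw [integral_add hlin hY2, integral_add (integrable_const a) hY1, integral_const,
    integral_const_mul, integral_const_mul, variance_eq_sub hY]
  simp only [probReal_univ, one_smul, Pi.pow_apply]
  ring

/-- **Unbiased variance estimator for quadratic variance functions (QVFs).**
If `Y` is square-integrable with mean `X` and variance `a + bX + cX²` where `c ≠ -1`, then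
`(a + bY + cY²)/(1 + c)` is an unbiased estimator of the variance of `Y`. -/
theorem stmt7 {Ω : Type*} [MeasurableSpace Ω] (μ : Measure Ω) [IsProbabilityMeasure μ]
    (Y : Ω → ℝ) (hY : MemLp Y 2 μ)
    (a b c X : ℝ) (hc : c ≠ -1)
    (hmean : ∫ ω, Y ω ∂μ = X)
    (hvar : variance Y μ = a + b * X + c * X ^ 2) :
    ∫ ω, (a + b * Y ω + c * (Y ω) ^ 2) / (1 + c) ∂μ = variance Y μ := by
  have hc' : 1 + c ≠ 0 := fun h => hc (by linarith)
  rw [integral_div, integral_quadratic_eq_of_memLp hY, hmean, div_eq_iff hc']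
  linear_combination -hvar
end

section
/- Let Y be a square-integrable real random variable with mean E[Y] = X and variance Var[Y] = a + bX + cX², let p ∈ (0,1], and let B be a Bernoulli(p) random variable independent of Y. Define the zero-inflated observation Ȳ = B·Y, and set X̄ = E[Ȳ] = p·X. Then Var[Ȳ] = a·p + b·p·X + p·(c + 1 − p)·X² = a·p + b·X̄ + ((c + 1 − p)/p)·X̄²; in particular, Ȳ again satisfies a quadratic relation between its mean and variance. -/
/-! Since `B` takes only the values `0` and `1`, `B² = B`; independence then gives
`E[BY] = p·E[Y]` and `E[(BY)²] = p·E[Y²] = p·(Var Y + X²)`,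
so `Var[BY] = p·(Var Y + X²) − p²X²`, again quadratic in the mean. -/

open MeasureTheory ProbabilityTheory

namespace ProbabilityTheory

variable {Ω : Type*} [MeasurableSpace Ω] {μ : Measure Ω}

lemma IndepFun.sq {X Y : Ω → ℝ} (h : IndepFun X Y μ) : IndepFun (X ^ 2) (Y ^ 2) μ := by
  exact h.comp (φ := fun x : ℝ => x ^ 2) (ψ := fun x : ℝ => x ^ 2) (by fun_prop) (by fun_prop)

lemma IndepFun.memLp_two_mul {X Y : Ω → ℝ} (h : IndepFun X Y μ) (hX : MemLp X 2 μ)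
    (hY : MemLp Y 2 μ) : MemLp (X * Y) 2 μ := by
  rw [memLp_two_iff_integrable_sq (hX.1.mul hY.1)]
  simp only [Pi.mul_apply, mul_pow]
  exact h.sq.integrable_mul hX.integrable_sq hY.integrable_sq

lemma IndepFun.variance_mul [IsProbabilityMeasure μ] {X Y : Ω → ℝ} (h : IndepFun X Y μ)
    (hX : MemLp X 2 μ) (hY : MemLp Y 2 μ) :
    variance (X * Y) μ = μ[X ^ 2] * μ[Y ^ 2] - (μ[X] * μ[Y]) ^ 2 := by
  rw [variance_eq_sub (h.memLp_two_mul hX hY), mul_pow,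
    h.sq.integral_mul_eq_mul_integral (hX.1.pow 2) (hY.1.pow 2),
    h.integral_mul_eq_mul_integral hX.1 hY.1]

end ProbabilityTheory

section ZeroOne

variable {Ω : Type*} {B : Ω → ℝ}

lemma eq_indicator_of_forall_eq_zero_or_one (hB : ∀ ω, B ω = 0 ∨ B ω = 1) :
    B = {ω | B ω = 1}.indicator (fun _ => 1) := by
  funext ω
  rcases hB ω with h | h <;> simp [h]

lemma sq_eq_self_of_forall_eq_zero_or_one (hB : ∀ ω, B ω = 0 ∨ B ω = 1) : B ^ 2 = B := by
  funext ω
  rcases hB ω with h | h <;> simp [h]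

lemma integral_eq_measureReal_of_forall_eq_zero_or_one [MeasurableSpace Ω] {μ : Measure Ω}
    (hBm : Measurable B) (hB : ∀ ω, B ω = 0 ∨ B ω = 1) :
    μ[B] = μ.real {ω | B ω = 1} := by
  conv_lhs => rw [eq_indicator_of_forall_eq_zero_or_one hB]
  rw [integral_indicator_const (1 : ℝ) (measurableSet_eq_fun hBm measurable_const), smul_eq_mul,
    mul_one]

lemma memLp_top_of_forall_eq_zero_or_one [MeasurableSpace Ω] {μ : Measure Ω} (hBm : Measurable B)
    (hB : ∀ ω, B ω = 0 ∨ B ω = 1) : MemLp B ⊤ μ :=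
  memLp_top_of_bound hBm.aestronglyMeasurable 1 <| .of_forall fun ω => by
    rcases hB ω with h | h <;> simp [h]

end ZeroOne

theorem stmt9_general {Ω : Type*} [MeasurableSpace Ω] (μ : Measure Ω) [IsProbabilityMeasure μ]
    (Y B : Ω → ℝ) (hY : MemLp Y 2 μ) (hBmeas : Measurable B)
    (a b c X p : ℝ) (hp : 0 < p)
    (hB01 : ∀ ω, B ω = 0 ∨ B ω = 1)
    (hBlaw : μ {ω | B ω = 1} = ENNReal.ofReal p)
    (hindep : IndepFun B Y μ)
    (hmean : ∫ ω, Y ω ∂μ = X)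
    (hvar : variance Y μ = a + b * X + c * X ^ 2) :
    (∫ ω, B ω * Y ω ∂μ = p * X) ∧
    variance (fun ω => B ω * Y ω) μ = a * p + b * p * X + p * (c + 1 - p) * X ^ 2 ∧
    variance (fun ω => B ω * Y ω) μ
      = a * p + b * (p * X) + ((c + 1 - p) / p) * (p * X) ^ 2 := by
  have hEB : μ[B] = p := by
    rw [integral_eq_measureReal_of_forall_eq_zero_or_one hBmeas hB01, measureReal_def, hBlaw,
      ENNReal.toReal_ofReal hp.le]
  have hB : MemLp B 2 μ := (memLp_top_of_forall_eq_zero_or_one hBmeas hB01).mono_exponent le_top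
  have hEY2 : μ[Y ^ 2] = variance Y μ + X ^ 2 := by
    rw [variance_eq_sub hY, hmean]
    ring
  have hmeanBY : ∫ ω, B ω * Y ω ∂μ = p * X := by
    rw [← Pi.mul_def, hindep.integral_mul_eq_mul_integral hB.1 hY.1, hEB, hmean]
  have hvarBY :
      variance (fun ω => B ω * Y ω) μ = a * p + b * p * X + p * (c + 1 - p) * X ^ 2 := by
    rw [← Pi.mul_def, hindep.variance_mul hB hY, sq_eq_self_of_forall_eq_zero_or_one hB01, hEB,
      hmean, hEY2, hvar]
    ring
  refine ⟨hmeanBY, hvarBY, ?_⟩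
  rw [hvarBY]
  field_simp

/-- **Zero-inflation preserves the quadratic mean-variance relation.**
If `Y` is square-integrable with mean `X` and variance `a + bX + cX²`, `B` is a `Bernoulli(p)`
variable independent of `Y` with `p ∈ (0,1]`, and `Ȳ = B·Y`, then `E[Ȳ] = pX` and
`Var[Ȳ] = ap + bpX + p(c + 1 − p)X²  = ap + b·X̄ + ((c + 1 − p)/p)·X̄²` where `X̄ = pX`. -/
theorem stmt9 {Ω : Type*} [MeasurableSpace Ω] (μ : Measure Ω) [IsProbabilityMeasure μ]
    (Y B : Ω → ℝ) (hY : MemLp Y 2 μ) (hYmeas : Measurable Y) (hBmeas : Measurable B)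
    (a b c X p : ℝ) (hp : 0 < p) (hp1 : p ≤ 1)
    (hB01 : ∀ ω, B ω = 0 ∨ B ω = 1)
    (hBlaw : μ {ω | B ω = 1} = ENNReal.ofReal p)
    (hindep : IndepFun B Y μ)
    (hmean : ∫ ω, Y ω ∂μ = X)
    (hvar : variance Y μ = a + b * X + c * X ^ 2) :
    (∫ ω, B ω * Y ω ∂μ = p * X) ∧
    variance (fun ω => B ω * Y ω) μ = a * p + b * p * X + p * (c + 1 - p) * X ^ 2 ∧
    variance (fun ω => B ω * Y ω) μ
      = a * p + b * (p * X) + ((c + 1 - p) / p) * (p * X) ^ 2 :=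
  stmt9_general μ Y B hY hBmeas a b c X p hp hB01 hBlaw hindep hmean hvar
end

section
/- Let Y be a square-integrable real random variable with mean E[Y] = X and variance Var[Y] = a + bX + cX² with c ≠ −1, let p ∈ (0,1], and let B be a Bernoulli(p) random variable independent of Y. Define Ȳ = B·Y. Then the statistic (a·p² + b·p·Ȳ + (1 + c − p)·Ȳ²)/(1 + c) is an unbiased estimator of Var[Ȳ]: E[(a·p² + b·p·Ȳ + (1 + c − p)·Ȳ²)/(1 + c)] = Var[Ȳ]. -/
open MeasureTheory ProbabilityTheory

/-!
Since `B² = B` and `B` is independent of `Y`, `E[Ȳ] = p E[Y]` and `E[Ȳ²] = p E[Y²]`, which gives the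
zero-inflation variance formula `Var[Ȳ] = p Var[Y] + p (1 - p) E[Y]²`. The estimator is quadratic in
`Ȳ`, so its expectation only involves `E[Ȳ]` and `E[Ȳ²] = Var[Ȳ] + E[Ȳ]²`; substituting the two
formulas, its numerator is `(1 + c) Var[Ȳ]`.
-/

section ZeroInflation

variable {Ω : Type*} [MeasurableSpace Ω] {μ : Measure Ω} {B Y : Ω → ℝ}

lemma integral_eq_measureReal_of_forall_eq_zero_or_eq_one (hB : Measurable B)
    (hB01 : ∀ ω, B ω = 0 ∨ B ω = 1) : ∫ ω, B ω ∂μ = μ.real {ω | B ω = 1} := by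
  have hB_eq : B = {ω | B ω = 1}.indicator 1 := by
    funext ω
    rcases hB01 ω with h | h <;> simp [h]
  conv_lhs => rw [hB_eq]
  exact integral_indicator_one (hB (measurableSet_singleton 1))

lemma memLp_mul_of_forall_eq_zero_or_eq_one {q : ENNReal} (hB : Measurable B)
    (hB01 : ∀ ω, B ω = 0 ∨ B ω = 1) (hY : MemLp Y q μ) :
    MemLp (fun ω => B ω * Y ω) q μ := by
  refine hY.of_le (hB.aestronglyMeasurable.mul hY.1) (Filter.Eventually.of_forall fun ω => ?_)
  rcases hB01 ω with h | h <;> simp [h]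

lemma integral_mul_sq_of_indepFun (hB : Measurable B) (hB01 : ∀ ω, B ω = 0 ∨ B ω = 1)
    (hY : AEStronglyMeasurable Y μ) (hindep : IndepFun B Y μ) :
    ∫ ω, (B ω * Y ω) ^ 2 ∂μ = μ[B] * ∫ ω, Y ω ^ 2 ∂μ := by
  have hBsq : (fun ω => B ω ^ 2) = B := by
    funext ω
    rcases hB01 ω with h | h <;> simp [h]
  have hindep_sq : IndepFun (fun ω => B ω ^ 2) (fun ω => Y ω ^ 2) μ :=
    hindep.comp (φ := fun x : ℝ => x ^ 2) (ψ := fun x : ℝ => x ^ 2) (by fun_prop) (by fun_prop)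
  simp_rw [mul_pow]
  rw [hindep_sq.integral_fun_mul_eq_mul_integral (hB.pow_const 2).aestronglyMeasurable
    (hY.pow 2), hBsq]

variable [IsProbabilityMeasure μ]

lemma variance_mul_of_indepFun (hB : Measurable B) (hB01 : ∀ ω, B ω = 0 ∨ B ω = 1)
    (hY : MemLp Y 2 μ) (hindep : IndepFun B Y μ) :
    variance (fun ω => B ω * Y ω) μ = μ[B] * variance Y μ + μ[B] * (1 - μ[B]) * μ[Y] ^ 2 := by
  rw [variance_eq_sub (memLp_mul_of_forall_eq_zero_or_eq_one hB hB01 hY), variance_eq_sub hY]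
  simp only [Pi.pow_apply]
  rw [integral_mul_sq_of_indepFun hB hB01 hY.1 hindep,
    hindep.integral_fun_mul_eq_mul_integral hB.aestronglyMeasurable hY.1]
  ring

lemma integral_quadratic_eq {Z : Ω → ℝ} (hZ : MemLp Z 2 μ) (α β γ : ℝ) :
    ∫ ω, α + β * Z ω + γ * Z ω ^ 2 ∂μ = α + β * μ[Z] + γ * (variance Z μ + μ[Z] ^ 2) := by
  have hZ_int : Integrable (fun ω => β * Z ω) μ := (hZ.integrable one_le_two).const_mul β
  have hZ_sq_int : Integrable (fun ω => γ * Z ω ^ 2) μ := hZ.integrable_sq.const_mul γ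
  have haff_int : Integrable (fun ω => α + β * Z ω) μ := (integrable_const α).add hZ_int
  rw [integral_add haff_int hZ_sq_int, integral_add (integrable_const α) hZ_int, integral_const,
    integral_const_mul, integral_const_mul, variance_eq_sub hZ]
  simp

end ZeroInflation

theorem stmt10_general {Ω : Type*} [MeasurableSpace Ω] (μ : Measure Ω) [IsProbabilityMeasure μ]
    (Y B : Ω → ℝ) (hY : MemLp Y 2 μ) (hBmeas : Measurable B)
    (a b c X p : ℝ) (hc : c ≠ -1) (hp : 0 < p)
    (hB01 : ∀ ω, B ω = 0 ∨ B ω = 1)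
    (hBlaw : μ {ω | B ω = 1} = ENNReal.ofReal p)
    (hindep : IndepFun B Y μ)
    (hmean : ∫ ω, Y ω ∂μ = X)
    (hvar : variance Y μ = a + b * X + c * X ^ 2) :
    ∫ ω, (a * p ^ 2 + b * p * (B ω * Y ω) + (1 + c - p) * (B ω * Y ω) ^ 2) / (1 + c) ∂μ
      = variance (fun ω => B ω * Y ω) μ := by
  have hc1 : 1 + c ≠ 0 := fun h => hc (by linarith)
  have hEB : μ[B] = p := by
    rw [integral_eq_measureReal_of_forall_eq_zero_or_eq_one hBmeas hB01, measureReal_def, hBlaw,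
      ENNReal.toReal_ofReal hp.le]
  have hEBY : ∫ ω, B ω * Y ω ∂μ = p * X := by
    rw [hindep.integral_fun_mul_eq_mul_integral hBmeas.aestronglyMeasurable hY.1, hEB, hmean]
  have hVarBY :
      variance (fun ω => B ω * Y ω) μ = p * (a + b * X + c * X ^ 2) + p * (1 - p) * X ^ 2 := by
    rw [variance_mul_of_indepFun hBmeas hB01 hY hindep, hEB, hvar, hmean]
  rw [integral_div, integral_quadratic_eq (Z := fun ω => B ω * Y ω)
    (memLp_mul_of_forall_eq_zero_or_eq_one hBmeas hB01 hY), hEBY, hVarBY]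
  field_simp
  ring

/-- **Unbiased variance estimator under zero-inflation.**
If `Y` is square-integrable with mean `X` and variance `a + bX + cX²` with `c ≠ −1`,
`B ~ Bernoulli(p)` is independent of `Y` with `p ∈ (0,1]`, and `Ȳ = B·Y`, then
`(ap² + bpȲ + (1 + c − p)Ȳ²)/(1 + c)` is an unbiased estimator of `Var[Ȳ]`. -/
theorem stmt10 {Ω : Type*} [MeasurableSpace Ω] (μ : Measure Ω) [IsProbabilityMeasure μ]
    (Y B : Ω → ℝ) (hY : MemLp Y 2 μ) (hYmeas : Measurable Y) (hBmeas : Measurable B)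
    (a b c X p : ℝ) (hc : c ≠ -1) (hp : 0 < p) (hp1 : p ≤ 1)
    (hB01 : ∀ ω, B ω = 0 ∨ B ω = 1)
    (hBlaw : μ {ω | B ω = 1} = ENNReal.ofReal p)
    (hindep : IndepFun B Y μ)
    (hmean : ∫ ω, Y ω ∂μ = X)
    (hvar : variance Y μ = a + b * X + c * X ^ 2) :
    ∫ ω, (a * p ^ 2 + b * p * (B ω * Y ω) + (1 + c - p) * (B ω * Y ω) ^ 2) / (1 + c) ∂μ
      = variance (fun ω => B ω * Y ω) μ :=
  stmt10_general μ Y B hY hBmeas a b c X p hc hp hB01 hBlaw hindep hmean hvar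
end

section
/- Let X > 0, let Y ~ Poisson(X), let α > 0, and define the truncated random variable Ȳ by: Ȳ = Y if X/α ≤ Y ≤ αX; Ȳ = X · Pr{Y < X/α − 1} / Pr{Y < X/α} if Y < X/α; and Ȳ = X · Pr{Y > αX − 1} / Pr{Y > αX} if Y > αX. Then, surely, min{ 1/α, 1 − X/(X + ⌈X/α⌉ − 1) } ≤ Ȳ/X ≤ 1 + α + X^{-1}. -/
/-!
Divided by `X`, both truncation constants are ratios of neighbouring tail probabilities of
`Y ~ Poisson(X)`, and the recursion `(k + 1) p(k + 1) = X p(k)` of the mass function `p` bounds the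
mass point separating the two tails by the smaller tail. For the lower tail, with
`m + 1 = ⌈X/α⌉`, `m p(m) = X p(m - 1) ≤ X P(Y < m)`, so
`P(Y < m) / P(Y < m + 1) ≥ m / (X + m) = 1 - X / (X + ⌈X/α⌉ - 1)`. For the upper tail, with
`n = ⌊αX⌋`, `X p(n) = (n + 1) p(n + 1) ≤ (n + 1) P(Y > n)`, so
`P(Y ≥ n) / P(Y > n) ≤ 1 + (n + 1) / X ≤ 1 + α + 1/X`.
-/

open MeasureTheory ProbabilityTheory Set
open scoped NNReal

namespace ProbabilityTheory

lemma poissonMeasure_real_singleton_succ_mul (r : ℝ≥0) (k : ℕ) :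
    (poissonMeasure r).real {k + 1} * (k + 1) = r * (poissonMeasure r).real {k} := by
  simp only [poissonMeasure_real_singleton, Nat.factorial_succ, Nat.cast_mul, Nat.cast_succ,
    pow_succ]
  field_simp

lemma poissonMeasure_real_Iio_succ (r : ℝ≥0) (m : ℕ) :
    (poissonMeasure r).real (Iio (m + 1)) =
      (poissonMeasure r).real (Iio m) + (poissonMeasure r).real {m} := by
  rw [Set.Iio_add_one_eq_Iic, ← Iio_union_right,
    measureReal_union (by simp) (measurableSet_singleton m)]

lemma poissonMeasure_real_Ici (r : ℝ≥0) (n : ℕ) :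
    (poissonMeasure r).real (Ici n) =
      (poissonMeasure r).real {n} + (poissonMeasure r).real (Ioi n) := by
  rw [← Ioi_insert, ← singleton_union, measureReal_union (by simp) measurableSet_Ioi]

lemma natCast_div_le_poissonMeasure_real_Iio_div {r : ℝ≥0} (hr : 0 < r) (m : ℕ) :
    (m : ℝ) / (r + m) ≤
      (poissonMeasure r).real (Iio m) / (poissonMeasure r).real (Iio (m + 1)) := by
  have hpos := poissonMeasure_real_singleton_pos m hr
  have hmass : (m : ℝ) * (poissonMeasure r).real {m} ≤ r * (poissonMeasure r).real (Iio m) := by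
    cases m with
    | zero => simp
    | succ k =>
      rw [Nat.cast_succ, mul_comm, poissonMeasure_real_singleton_succ_mul]
      exact mul_le_mul_of_nonneg_left
        (measureReal_mono (singleton_subset_iff.2 k.lt_succ_self)) r.coe_nonneg
  rw [poissonMeasure_real_Iio_succ, div_le_div_iff₀ (by positivity) (by positivity)]
  nlinarith

lemma poissonMeasure_real_Iio_div_Iio_succ_le_one (r : ℝ≥0) (m : ℕ) :
    (poissonMeasure r).real (Iio m) / (poissonMeasure r).real (Iio (m + 1)) ≤ 1 :=
  div_le_one_of_le₀ (measureReal_mono (Iio_subset_Iio m.le_succ)) measureReal_nonneg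

lemma one_le_poissonMeasure_real_Ici_div_Ioi {r : ℝ≥0} (hr : 0 < r) (n : ℕ) :
    1 ≤ (poissonMeasure r).real (Ici n) / (poissonMeasure r).real (Ioi n) := by
  have hpos : 0 < (poissonMeasure r).real (Ioi n) :=
    (poissonMeasure_real_singleton_pos (n + 1) hr).trans_le
      (measureReal_mono (singleton_subset_iff.2 n.lt_succ_self))
  exact (one_le_div hpos).2 (measureReal_mono Ioi_subset_Ici_self)

lemma poissonMeasure_real_Ici_div_Ioi_le {r : ℝ≥0} (hr : 0 < r) (n : ℕ) :
    (poissonMeasure r).real (Ici n) / (poissonMeasure r).real (Ioi n) ≤ 1 + (n + 1) / r := by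
  have htail : (poissonMeasure r).real {n + 1} ≤ (poissonMeasure r).real (Ioi n) :=
    measureReal_mono (singleton_subset_iff.2 n.lt_succ_self)
  have hpos : 0 < (poissonMeasure r).real (Ioi n) :=
    (poissonMeasure_real_singleton_pos (n + 1) hr).trans_le htail
  have hmass : r * (poissonMeasure r).real {n} ≤ (n + 1) * (poissonMeasure r).real (Ioi n) := by
    rw [← poissonMeasure_real_singleton_succ_mul, mul_comm]
    gcongr
  rw [poissonMeasure_real_Ici, add_div, div_self hpos.ne', add_comm, add_le_add_iff_left,
    div_le_div_iff₀ hpos (by positivity)]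
  linarith

end ProbabilityTheory

namespace Nat

lemma setOf_cast_lt_eq_Iio_ceil (a : ℝ) : {k : ℕ | (k : ℝ) < a} = Iio ⌈a⌉₊ := by
  ext k
  simp [Nat.lt_ceil]

lemma setOf_cast_lt_sub_one_eq_Iio (a : ℝ) :
    {k : ℕ | (k : ℝ) < a - 1} = Iio (⌈a⌉₊ - 1) := by
  ext k
  rw [mem_ofPred_eq, mem_Iio, lt_sub_iff_add_lt, ← Nat.cast_succ, ← Nat.lt_ceil]
  omega

lemma setOf_lt_cast_eq_Ioi_floor {b : ℝ} (hb : 0 ≤ b) : {k : ℕ | b < k} = Ioi ⌊b⌋₊ := by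
  ext k
  simp [Nat.floor_lt hb]

lemma setOf_sub_one_lt_cast_eq_Ici_floor {b : ℝ} (hb : 0 ≤ b) :
    {k : ℕ | b - 1 < k} = Ici ⌊b⌋₊ := by
  ext k
  rw [mem_ofPred_eq, mem_Ici, sub_lt_iff_lt_add, ← Nat.cast_succ, ← Nat.floor_lt hb,
    Nat.lt_succ_iff]

end Nat

theorem stmt12_general {Ω : Type*} [MeasurableSpace Ω] (μ : Measure Ω)
    (X α : ℝ) (hX : 0 < X) (hα : 0 < α)
    (Y : Ω → ℕ) (hYmeas : Measurable Y)
    (hYlaw : Measure.map Y μ = poissonMeasure X.toNNReal)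
    (Ybar : Ω → ℝ)
    (hYbar : ∀ ω, Ybar ω =
      if X / α ≤ (Y ω : ℝ) ∧ (Y ω : ℝ) ≤ α * X then (Y ω : ℝ)
      else if (Y ω : ℝ) < X / α then
        X * (μ {ω' | (Y ω' : ℝ) < X / α - 1}).toReal / (μ {ω' | (Y ω' : ℝ) < X / α}).toReal
      else
        X * (μ {ω' | α * X - 1 < (Y ω' : ℝ)}).toReal / (μ {ω' | α * X < (Y ω' : ℝ)}).toReal) :
    ∀ ω, min (1 / α) (1 - X / (X + (⌈X / α⌉ : ℝ) - 1)) ≤ Ybar ω / X ∧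
      Ybar ω / X ≤ 1 + α + X⁻¹ := by
  have hr : 0 < X.toNNReal := Real.toNNReal_pos.2 hX
  have hXr : (X.toNNReal : ℝ) = X := Real.coe_toNNReal _ hX.le
  have hlaw (p : ℕ → Prop) :
      (μ {ω | p (Y ω)}).toReal = (poissonMeasure X.toNNReal).real {k | p k} := by
    rw [← hYlaw, map_measureReal_apply hYmeas (.of_discrete)]
    rfl
  have hXα : 0 < X / α := div_pos hX hα
  obtain ⟨m, hm⟩ : ∃ m, ⌈X / α⌉₊ = m + 1 := Nat.exists_eq_add_one.2 (Nat.ceil_pos.2 hXα)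
  have hceil : ((⌈X / α⌉ : ℤ) : ℝ) = m + 1 := by
    rw [← natCast_ceil_eq_intCast_ceil hXα.le, hm, Nat.cast_succ]
  have hlower : 1 - X / (X + (m + 1) - 1) = m / (X + m) := by
    have hpos : X + m ≠ 0 := by positivity
    rw [← add_assoc, add_sub_cancel_right, one_sub_div hpos, add_sub_cancel_left]
  intro ω
  rw [hYbar ω, hlaw (fun k => (k : ℝ) < X / α - 1), hlaw (fun k => (k : ℝ) < X / α),
    hlaw (fun k => α * X - 1 < (k : ℝ)), hlaw (fun k => α * X < (k : ℝ)),
    Nat.setOf_cast_lt_sub_one_eq_Iio, Nat.setOf_cast_lt_eq_Iio_ceil,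
    Nat.setOf_sub_one_lt_cast_eq_Ici_floor (by positivity),
    Nat.setOf_lt_cast_eq_Ioi_floor (by positivity), hm, Nat.add_sub_cancel, hceil, hlower]
  split_ifs with hmid
  · have hge : 1 / α ≤ Y ω / X := by
      rw [div_le_div_iff₀ hα hX, one_mul]
      exact (div_le_iff₀ hα).1 hmid.1
    have hle : Y ω / X ≤ α := (div_le_iff₀ hX).2 hmid.2
    exact ⟨(min_le_left _ _).trans hge, by linarith [inv_pos.2 hX]⟩
  · rw [mul_div_assoc, mul_div_cancel_left₀ _ hX.ne']
    have hge := natCast_div_le_poissonMeasure_real_Iio_div hr m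
    rw [hXr] at hge
    have hle := poissonMeasure_real_Iio_div_Iio_succ_le_one X.toNNReal m
    exact ⟨(min_le_right _ _).trans hge, by linarith [inv_pos.2 hX]⟩
  · rw [mul_div_assoc, mul_div_cancel_left₀ _ hX.ne']
    have hge := one_le_poissonMeasure_real_Ici_div_Ioi hr ⌊α * X⌋₊
    have hle := poissonMeasure_real_Ici_div_Ioi_le hr ⌊α * X⌋₊
    have hfloor : ((⌊α * X⌋₊ : ℝ) + 1) / X ≤ α + X⁻¹ := by
      rw [add_div, one_div, add_le_add_iff_right, div_le_iff₀ hX]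
      exact Nat.floor_le (by positivity)
    have hmX : (m : ℝ) / (X + m) ≤ 1 := div_le_one_of_le₀ (by linarith) (by positivity)
    rw [hXr] at hle
    exact ⟨(min_le_right _ _).trans (hmX.trans hge), by linarith⟩

/-- **Sure bounds on the truncated Poisson variable.**
Let `Y ~ Poisson(X)` with `X > 0` and `α > 0`, and let `Ȳ` be the mean-preserving truncation
of `Y` to `[X/α, αX]`. Then, surely,
`min{1/α, 1 − X/(X + ⌈X/α⌉ − 1)} ≤ Ȳ/X ≤ 1 + α + X⁻¹`. -/
theorem stmt12 {Ω : Type*} [MeasurableSpace Ω] (μ : Measure Ω) [IsProbabilityMeasure μ]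
    (X α : ℝ) (hX : 0 < X) (hα : 0 < α)
    (Y : Ω → ℕ) (hYmeas : Measurable Y)
    (hYlaw : Measure.map Y μ = poissonMeasure X.toNNReal)
    (Ybar : Ω → ℝ)
    (hYbar : ∀ ω, Ybar ω =
      if X / α ≤ (Y ω : ℝ) ∧ (Y ω : ℝ) ≤ α * X then (Y ω : ℝ)
      else if (Y ω : ℝ) < X / α then
        X * (μ {ω' | (Y ω' : ℝ) < X / α - 1}).toReal / (μ {ω' | (Y ω' : ℝ) < X / α}).toReal
      else
        X * (μ {ω' | α * X - 1 < (Y ω' : ℝ)}).toReal / (μ {ω' | α * X < (Y ω' : ℝ)}).toReal) :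
    ∀ ω, min (1 / α) (1 - X / (X + (⌈X / α⌉ : ℝ) - 1)) ≤ Ybar ω / X ∧
      Ybar ω / X ≤ 1 + α + X⁻¹ :=
  stmt12_general μ X α hX hα Y hYmeas hYlaw Ybar hYbar
end
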